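/- arXiv:2408.11674 — 3 statements merged into one kernel-verified Lean document; each statement's English description precedes it below -/
import Mathlib

section
/- Let t ↦ b_t and t ↦ a_t be differentiable curves of alternating linear maps V → V* and of linear maps V → 𝔨 respectively, with derivatives ḃ_t and ȧ_t. Then for every fixed u = X + r + ξ ∈ E and every t, the conjugated derivative C_t(u) := e^{(−b_t, a_t)}( d/dt [ e^{(b_t, −a_t)}(u) ] ) is given explicitly by C_t(u) = 0 + ( −ȧ_t(X) ) + ( (ḃ_t − ⟨a_t ∧ ȧ_t⟩)(X) + 2⟨ȧ_t(·), r⟩_𝔨 ), where ⟨a ∧ ȧ⟩(X)(Y) := ⟨a(X), ȧ(Y)⟩_𝔨 − ⟨a(Y), ȧ(X)⟩_𝔨 and ⟨ȧ_t(·), r⟩_𝔨 is the covector Y ↦ ⟨ȧ_t(Y), r⟩_𝔨. In particular C_t(u) lies in 𝔨 ⊕ V* and does not depend on ξ. (This is the variation formula for a family of isotropic splittings used in deriving the explicit generalized Ricci flow equations on a string algebroid.) -/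
/-!
Variation formula for a family of isotropic splittings: for curves `b_t`, `a_t` of
alternating maps `V → V*` and maps `V → 𝓀`, the conjugated derivative
`C_t(u) = e^{(−b_t, a_t)}( d/dt [ e^{(b_t, −a_t)}(u) ] )` equals
`0 + (−ȧ_t X) + ((ḃ_t − ⟨a_t ∧ ȧ_t⟩)(X) + 2⟨ȧ_t(·), r⟩_𝓀)`.
-/

namespace Stmt2

variable {V 𝓀 : Type*} [NormedAddCommGroup V] [NormedSpace ℝ V] [FiniteDimensional ℝ V]
  [NormedAddCommGroup 𝓀] [NormedSpace ℝ 𝓀] [FiniteDimensional ℝ 𝓀]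

/-- The fibre `E = V ⊕ 𝓀 ⊕ V*`. -/
abbrev E (V 𝓀 : Type*) [NormedAddCommGroup V] [NormedSpace ℝ V]
    [NormedAddCommGroup 𝓀] [NormedSpace ℝ 𝓀] :=
  V × 𝓀 × Module.Dual ℝ V

/-- The `(b,a)`-transformation
`e^{(b,a)}(X + r + ξ) = X + (r + a X) + (ξ + b X − ⟨a X, a ·⟩_𝓀 − 2⟨a ·, r⟩_𝓀)`. -/
noncomputable def eBA (k : 𝓀 →ₗ[ℝ] 𝓀 →ₗ[ℝ] ℝ) (b : V →ₗ[ℝ] Module.Dual ℝ V)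
    (a : V →ₗ[ℝ] 𝓀) (u : E V 𝓀) : E V 𝓀 :=
  (u.1, u.2.1 + a u.1,
    u.2.2 + b u.1 - (k (a u.1)).comp a - (2 : ℝ) • ((k.flip u.2.1).comp a))

theorem statement2 (k : 𝓀 →ₗ[ℝ] 𝓀 →ₗ[ℝ] ℝ) (hk : ∀ r t : 𝓀, k r t = k t r)
    (b bdot : ℝ → (V →ₗ[ℝ] Module.Dual ℝ V))
    (a adot : ℝ → (V →ₗ[ℝ] 𝓀))
    (hb_alt : ∀ (t : ℝ) (X Y : V), b t X Y = -(b t Y X))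
    (hb_deriv : ∀ (t : ℝ) (X Y : V), HasDerivAt (fun s => b s X Y) (bdot t X Y) t)
    (ha_deriv : ∀ (t : ℝ) (X : V), HasDerivAt (fun s => a s X) (adot t X) t)
    (u : E V 𝓀) (t : ℝ) (D : E V 𝓀)
    -- `D` is the derivative at time `t` of the curve `s ↦ e^{(b_s, −a_s)}(u)` in `E`
    (hD1 : HasDerivAt (fun s => (eBA k (b s) (-(a s)) u).1) D.1 t)
    (hD2 : HasDerivAt (fun s => (eBA k (b s) (-(a s)) u).2.1) D.2.1 t)
    (hD3 : ∀ Y : V, HasDerivAt (fun s => (eBA k (b s) (-(a s)) u).2.2 Y) (D.2.2 Y) t) :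
    eBA k (-(b t)) (a t) D =
      ((0 : V), -(adot t u.1),
        bdot t u.1
          - ((k (a t u.1)).comp (adot t) - (k.flip (adot t u.1)).comp (a t))
          + (2 : ℝ) • ((k.flip u.2.1).comp (adot t))) := by
  obtain ⟨X, r, ξ⟩ := u
  -- continuous bilinear version of k
  set K : 𝓀 →L[ℝ] 𝓀 →L[ℝ] ℝ :=
    LinearMap.toContinuousLinearMap
      (((LinearMap.toContinuousLinearMap :
          (𝓀 →ₗ[ℝ] ℝ) ≃ₗ[ℝ] (𝓀 →L[ℝ] ℝ)).toLinearMap).comp k) with hK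
  have hKapp : ∀ v w : 𝓀, K v w = k v w := by
    intro v w; simp [hK]
  have h1 : D.1 = 0 := by
    have : HasDerivAt (fun s => (eBA k (b s) (-(a s)) (X, r, ξ)).1) 0 t := by
      simp only [eBA]
      exact hasDerivAt_const t X
    exact hD1.unique this
  have h2 : D.2.1 = -(adot t X) := by
    have : HasDerivAt (fun s => (eBA k (b s) (-(a s)) (X, r, ξ)).2.1) (-(adot t X)) t := by
      simp only [eBA, LinearMap.neg_apply]
      exact ((ha_deriv t X).neg).const_add r
    exact hD2.unique this
  have h3 : ∀ Y : V, D.2.2 Y =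
      bdot t X Y - (k (adot t X) (a t Y) + k (a t X) (adot t Y)) + 2 * k (adot t Y) r := by
    intro Y
    have hc : HasDerivAt (fun s => K (a s X)) (K (adot t X)) t :=
      (K.hasFDerivAt).comp_hasDerivAt t (ha_deriv t X)
    have hmul : HasDerivAt (fun s => K (a s X) (a s Y))
        (K (adot t X) (a t Y) + K (a t X) (adot t Y)) t :=
      hc.clm_apply (ha_deriv t Y)
    have hcY : HasDerivAt (fun s => K (a s Y)) (K (adot t Y)) t :=
      (K.hasFDerivAt).comp_hasDerivAt t (ha_deriv t Y)
    have hlast : HasDerivAt (fun s => K (a s Y) r) (K (adot t Y) r) t := by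
      have := hcY.clm_apply (hasDerivAt_const t r)
      simpa using this
    have hg : HasDerivAt (fun s => ξ Y + b s X Y - K (a s X) (a s Y) + 2 * (K (a s Y) r))
        (bdot t X Y - (K (adot t X) (a t Y) + K (a t X) (adot t Y)) + 2 * K (adot t Y) r) t := by
      have := (((hb_deriv t X Y).const_add (ξ Y)).sub hmul).add (hlast.const_mul 2)
      exact this
    have heq : (fun s => (eBA k (b s) (-(a s)) (X, r, ξ)).2.2 Y)
        = fun s => ξ Y + b s X Y - K (a s X) (a s Y) + 2 * (K (a s Y) r) := by
      funext s
      simp [eBA, hKapp]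
    have := (hD3 Y).unique (heq ▸ hg)
    rw [this]
    simp [hKapp]
  refine Prod.ext ?_ (Prod.ext ?_ ?_)
  · simp [eBA, h1]
  · simp [eBA, h1, h2]
  · apply LinearMap.ext
    intro Y
    simp only [eBA, h1, h2, LinearMap.sub_apply, LinearMap.add_apply, LinearMap.smul_apply,
      LinearMap.comp_apply, LinearMap.neg_apply, LinearMap.flip_apply, map_zero,
      LinearMap.zero_apply, smul_eq_mul]
    rw [h3 Y]
    simp only [map_neg, LinearMap.neg_apply, neg_neg]
    linarith [hk (adot t X) (a t Y)]

end Stmt2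
end

section
/- Let n ≥ 1, let 0 < λ ≤ Λ be reals, and let A, B be Hermitian n×n complex matrices with λ·I ≤ A ≤ Λ·I and λ·I ≤ B ≤ Λ·I in the Loewner order (i.e. A − λI, ΛI − A, B − λI, ΛI − B are all positive semidefinite). Then the matrix M := ∫₀¹ (sA + (1−s)B)⁻¹ ds is Hermitian and satisfies Λ⁻¹·I ≤ M ≤ λ⁻¹·I, and moreover log(det A) − log(det B) = Re( tr( M · (A − B) ) ), where det A and det B are positive real numbers since A and B are positive definite, and log denotes the real logarithm. (This mean-value identity expresses the uniform ellipticity of the operator log det used in the Evans–Krylov-type Hölder estimate for the flow of metrics h.) -/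
/-!
Mean-value identity for `log det` on uniformly positive Hermitian matrices:
with `M := ∫₀¹ (sA + (1−s)B)⁻¹ ds` (entrywise integral), `M` is Hermitian,
`Λ⁻¹ I ≤ M ≤ λ⁻¹ I` in the Loewner order, and
`log det A − log det B = Re tr(M (A − B))`.
-/

open scoped ComplexOrder

/-- The entrywise integral `M = ∫₀¹ (sA + (1−s)B)⁻¹ ds`. -/
noncomputable def meanMatrix (n : ℕ) (A B : Matrix (Fin n) (Fin n) ℂ) :
    Matrix (Fin n) (Fin n) ℂ :=
  Matrix.of fun i j => ∫ s in (0:ℝ)..1, ((((s : ℝ) : ℂ) • A + (((1 - s : ℝ)) : ℂ) • B)⁻¹ i j)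

open Matrix Polynomial intervalIntegral


lemma aux_psd_smul {n : ℕ} {P : Matrix (Fin n) (Fin n) ℂ} (hP : P.PosSemidef) {c : ℝ}
    (hc : 0 ≤ c) : ((c : ℂ) • P).PosSemidef := by
  refine Matrix.PosSemidef.of_dotProduct_mulVec_nonneg ?_ fun x => ?_
  · rw [Matrix.IsHermitian, conjTranspose_smul, hP.isHermitian.eq]
    congr 1
    simp [Complex.star_def, Complex.conj_ofReal]
  · rw [smul_mulVec, dotProduct_smul, smul_eq_mul]
    exact mul_nonneg (by exact_mod_cast hc) (hP.dotProduct_mulVec_nonneg x)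

lemma aux_posdef {n : ℕ} {lam : ℝ} (hlam : 0 < lam) {C : Matrix (Fin n) (Fin n) ℂ}
    (h1 : (C - (lam : ℂ) • 1).PosSemidef) : C.PosDef := by
  have hId : ((lam : ℂ) • (1 : Matrix (Fin n) (Fin n) ℂ)).PosDef := by
    refine Matrix.PosDef.of_dotProduct_mulVec_pos ?_ fun x hx => ?_
    · rw [Matrix.IsHermitian, conjTranspose_smul, conjTranspose_one]
      congr 1
      simp [Complex.star_def, Complex.conj_ofReal]
    · rw [smul_mulVec, dotProduct_smul, smul_eq_mul, one_mulVec]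
      exact mul_pos (by exact_mod_cast hlam) (Matrix.dotProduct_star_self_pos_iff.mpr hx)
  simpa using Matrix.PosDef.posSemidef_add h1 hId

open scoped MatrixOrder in
lemma aux_inv_loewner {n : ℕ} {lam Lam : ℝ} (hlam : 0 < lam) (hle : lam ≤ Lam)
    {C : Matrix (Fin n) (Fin n) ℂ}
    (h1 : (C - (lam : ℂ) • 1).PosSemidef) (h2 : ((Lam : ℂ) • 1 - C).PosSemidef) :
    (C⁻¹ - ((Lam⁻¹ : ℝ) : ℂ) • 1).PosSemidef ∧
      (((lam⁻¹ : ℝ) : ℂ) • 1 - C⁻¹).PosSemidef := by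
  have hLam : 0 < Lam := hlam.trans_le hle
  have hC : C.PosDef := aux_posdef hlam h1
  have hdet : IsUnit C.det := isUnit_iff_ne_zero.mpr hC.det_pos.ne'
  set S := CFC.sqrt C with hSdef
  have hS : S.PosSemidef := (CFC.sqrt_nonneg C).posSemidef
  have hSS : S * S = C := CFC.sqrt_mul_sqrt_self C hC.posSemidef.nonneg
  have hSdet : IsUnit S.det := by
    have : S.det * S.det = C.det := by rw [← det_mul, hSS]
    exact isUnit_of_mul_isUnit_left (this ▸ hdet)
  have hinv2 : S⁻¹ * S⁻¹ = C⁻¹ := by rw [← Matrix.mul_inv_rev, hSS]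
  have hmid : S⁻¹ * C * S⁻¹ = 1 := by
    rw [← hSS, ← Matrix.mul_assoc, Matrix.mul_assoc (S⁻¹ * S),
      Matrix.mul_nonsing_inv _ hSdet, Matrix.mul_one, Matrix.nonsing_inv_mul _ hSdet]
  have hSinvH : (S⁻¹)ᴴ = S⁻¹ := hS.isHermitian.inv.eq
  constructor
  · have P1 := h2.mul_mul_conjTranspose_same S⁻¹
    rw [hSinvH] at P1
    have e1 : S⁻¹ * ((Lam : ℂ) • 1 - C) * S⁻¹ = (Lam : ℂ) • C⁻¹ - 1 := by
      rw [Matrix.mul_sub, Matrix.sub_mul, Matrix.mul_smul, Matrix.mul_one, Matrix.smul_mul,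
        hinv2, hmid]
    rw [e1] at P1
    have := aux_psd_smul P1 (le_of_lt (inv_pos.mpr hLam))
    have e2 : ((Lam⁻¹ : ℝ) : ℂ) • ((Lam : ℂ) • C⁻¹ - 1) = C⁻¹ - ((Lam⁻¹ : ℝ) : ℂ) • 1 := by
      rw [smul_sub, smul_smul]
      norm_cast
      rw [inv_mul_cancel₀ hLam.ne']
      push_cast
      rw [one_smul]
    rwa [e2] at this
  · have P2 := h1.mul_mul_conjTranspose_same S⁻¹
    rw [hSinvH] at P2
    have e1 : S⁻¹ * (C - (lam : ℂ) • 1) * S⁻¹ = 1 - (lam : ℂ) • C⁻¹ := by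
      rw [Matrix.mul_sub, Matrix.sub_mul, Matrix.mul_smul, Matrix.mul_one, Matrix.smul_mul,
        hinv2, hmid]
    rw [e1] at P2
    have := aux_psd_smul P2 (le_of_lt (inv_pos.mpr hlam))
    have e2 : ((lam⁻¹ : ℝ) : ℂ) • (1 - (lam : ℂ) • C⁻¹) = ((lam⁻¹ : ℝ) : ℂ) • 1 - C⁻¹ := by
      rw [smul_sub, smul_smul]
      norm_cast
      rw [inv_mul_cancel₀ hlam.ne']
      push_cast
      rw [one_smul]
    rwa [e2] at this


lemma aux_hasDerivAt_det {n : ℕ} (C₀ D : Matrix (Fin n) (Fin n) ℂ) (h : IsUnit C₀.det) :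
    HasDerivAt (fun z : ℂ => (C₀ + z • D).det) (C₀.det * ((C₀⁻¹ * D).trace)) 0 := by
  set M := C₀⁻¹ * D with hM
  set q : ℂ[X] := (Matrix.det (1 + (Polynomial.X : ℂ[X]) • M.map Polynomial.C)).divX.divX with hq
  have hfun : ∀ z : ℂ, (C₀ + z • D).det
      = C₀.det * (1 + M.trace * z + q.eval z * z ^ 2) := by
    intro z
    have e : C₀ + z • D = C₀ * (1 + z • M) := by
      rw [Matrix.mul_add, Matrix.mul_one, Matrix.mul_smul, hM, ← Matrix.mul_assoc,
        Matrix.mul_nonsing_inv _ h, Matrix.one_mul]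
    rw [e, det_mul, Matrix.det_one_add_smul]
  have h1 : HasDerivAt (fun z : ℂ => 1 + M.trace * z + q.eval z * z ^ 2) M.trace 0 := by
    have ha : HasDerivAt (fun z : ℂ => 1 + M.trace * z) M.trace 0 := by
      simpa using ((hasDerivAt_id (0 : ℂ)).const_mul M.trace).const_add 1
    have hb : HasDerivAt (fun z : ℂ => q.eval z * z ^ 2) 0 0 := by
      simpa using (q.hasDerivAt (0 : ℂ)).fun_mul (hasDerivAt_pow 2 (0 : ℂ))
    simpa using ha.fun_add hb
  have := h1.const_mul C₀.det
  simpa [funext hfun] using this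

theorem statement7 (n : ℕ) (hn : 1 ≤ n) (lam Lam : ℝ) (hlam : 0 < lam) (hle : lam ≤ Lam)
    (A B : Matrix (Fin n) (Fin n) ℂ)
    (hA : A.IsHermitian) (hB : B.IsHermitian)
    (hA1 : (A - (lam : ℂ) • (1 : Matrix (Fin n) (Fin n) ℂ)).PosSemidef)
    (hA2 : ((Lam : ℂ) • (1 : Matrix (Fin n) (Fin n) ℂ) - A).PosSemidef)
    (hB1 : (B - (lam : ℂ) • (1 : Matrix (Fin n) (Fin n) ℂ)).PosSemidef)
    (hB2 : ((Lam : ℂ) • (1 : Matrix (Fin n) (Fin n) ℂ) - B).PosSemidef) :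
    (meanMatrix n A B).IsHermitian ∧
    (meanMatrix n A B - ((Lam⁻¹ : ℝ) : ℂ) • (1 : Matrix (Fin n) (Fin n) ℂ)).PosSemidef ∧
    (((lam⁻¹ : ℝ) : ℂ) • (1 : Matrix (Fin n) (Fin n) ℂ) - meanMatrix n A B).PosSemidef ∧
    Real.log A.det.re - Real.log B.det.re =
      ((meanMatrix n A B * (A - B)).trace).re := by
  have hLam : 0 < Lam := hlam.trans_le hle
  set D : Matrix (Fin n) (Fin n) ℂ := A - B with hD
  set Cm : ℝ → Matrix (Fin n) (Fin n) ℂ :=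
    fun t => ((t : ℝ) : ℂ) • A + (((1 - t : ℝ)) : ℂ) • B with hCm
  -- pointwise Loewner bounds on [0,1]
  have hlow : ∀ t : ℝ, t ∈ Set.Icc (0:ℝ) 1 → (Cm t - (lam : ℂ) • 1).PosSemidef := by
    intro t ht
    have h1 := aux_psd_smul hA1 ht.1
    have h2 := aux_psd_smul hB1 (by linarith [ht.2] : (0:ℝ) ≤ 1 - t)
    have e : ((t:ℝ):ℂ) • (A - (lam : ℂ) • 1) + (((1 - t:ℝ)):ℂ) • (B - (lam : ℂ) • 1)
        = Cm t - (lam : ℂ) • 1 := by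
      ext i j
      simp only [Matrix.add_apply, Matrix.smul_apply, Matrix.sub_apply, smul_eq_mul, hCm]
      push_cast
      ring
    rw [← e]; exact h1.add h2
  have hup : ∀ t : ℝ, t ∈ Set.Icc (0:ℝ) 1 → ((Lam : ℂ) • 1 - Cm t).PosSemidef := by
    intro t ht
    have h1 := aux_psd_smul hA2 ht.1
    have h2 := aux_psd_smul hB2 (by linarith [ht.2] : (0:ℝ) ≤ 1 - t)
    have e : ((t:ℝ):ℂ) • ((Lam : ℂ) • 1 - A) + (((1 - t:ℝ)):ℂ) • ((Lam : ℂ) • 1 - B)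
        = (Lam : ℂ) • 1 - Cm t := by
      ext i j
      simp only [Matrix.add_apply, Matrix.smul_apply, Matrix.sub_apply, smul_eq_mul, hCm]
      push_cast
      ring
    rw [← e]; exact h1.add h2
  have hPD : ∀ t : ℝ, t ∈ Set.Icc (0:ℝ) 1 → (Cm t).PosDef :=
    fun t ht => aux_posdef hlam (hlow t ht)
  have hbounds : ∀ t : ℝ, t ∈ Set.Icc (0:ℝ) 1 →
      ((Cm t)⁻¹ - ((Lam⁻¹ : ℝ) : ℂ) • 1).PosSemidef ∧
        (((lam⁻¹ : ℝ) : ℂ) • 1 - (Cm t)⁻¹).PosSemidef :=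
    fun t ht => aux_inv_loewner hlam hle (hlow t ht) (hup t ht)
  -- continuity
  have hContC : Continuous Cm := by
    apply continuous_matrix
    intro i j
    simp only [hCm, Matrix.add_apply, Matrix.smul_apply, smul_eq_mul]
    fun_prop
  have hdetne : ∀ t ∈ Set.uIcc (0:ℝ) 1, (Cm t).det ≠ 0 := by
    intro t ht
    rw [Set.uIcc_of_le (zero_le_one)] at ht
    exact (hPD t ht).det_pos.ne'
  have hInvCont : ContinuousOn (fun t => (Cm t)⁻¹) (Set.uIcc (0:ℝ) 1) := by
    have e : (fun t => (Cm t)⁻¹) = fun t => ((Cm t).det)⁻¹ • (Cm t).adjugate := by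
      funext t
      rw [Matrix.inv_def, Ring.inverse_eq_inv']
    rw [e]
    exact (hContC.matrix_det.continuousOn.inv₀ hdetne).smul
      hContC.matrix_adjugate.continuousOn
  have hEntryCont : ∀ i j, ContinuousOn (fun t => (Cm t)⁻¹ i j) (Set.uIcc (0:ℝ) 1) := by
    intro i j
    exact ((continuous_apply j).comp (continuous_apply i)).comp_continuousOn hInvCont
  have hIntInv : ∀ i j, IntervalIntegrable (fun t => (Cm t)⁻¹ i j) MeasureTheory.volume 0 1 :=
    fun i j => (hEntryCont i j).intervalIntegrable
  have hMapply : ∀ i j, meanMatrix n A B i j = ∫ t in (0:ℝ)..1, (Cm t)⁻¹ i j := by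
    intro i j; rfl
  -- Hermitian of Cm t and its inverse
  have hCmHerm : ∀ t : ℝ, (Cm t).IsHermitian := by
    intro t
    rw [Matrix.IsHermitian, hCm, conjTranspose_add, conjTranspose_smul, conjTranspose_smul,
      hA.eq, hB.eq]
    congr 1 <;> · congr 1; simp [Complex.star_def, Complex.conj_ofReal]
  have hInvHerm : ∀ t : ℝ, ((Cm t)⁻¹).IsHermitian := fun t => (hCmHerm t).inv
  -- Part 1 : M Hermitian
  have hMHerm : (meanMatrix n A B).IsHermitian := by
    rw [Matrix.IsHermitian]
    ext i j
    rw [conjTranspose_apply, hMapply, hMapply]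
    have := Complex.conjCLE.toContinuousLinearMap.intervalIntegral_comp_comm (hIntInv j i)
    simp only [ContinuousLinearEquiv.coe_coe] at this
    rw [show (star (∫ t in (0:ℝ)..1, (Cm t)⁻¹ j i) : ℂ)
        = Complex.conjCLE (∫ t in (0:ℝ)..1, (Cm t)⁻¹ j i) from rfl, ← this]
    congr 1
    funext t
    have := (hInvHerm t).eq
    calc Complex.conjCLE ((Cm t)⁻¹ j i) = ((Cm t)⁻¹)ᴴ i j := rfl
    _ = (Cm t)⁻¹ i j := by rw [this]
  -- quadratic form machinery
  have hquad : ∀ (N : Matrix (Fin n) (Fin n) ℂ) (x : Fin n → ℂ),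
      star x ⬝ᵥ (N *ᵥ x) = ∑ i, ∑ j, star (x i) * (N i j * x j) := by
    intro N x
    simp [dotProduct, Matrix.mulVec, Finset.mul_sum]
  have hQM : ∀ x : Fin n → ℂ,
      star x ⬝ᵥ (meanMatrix n A B *ᵥ x) = ∫ t in (0:ℝ)..1, star x ⬝ᵥ ((Cm t)⁻¹ *ᵥ x) := by
    intro x
    rw [hquad]
    have hint : ∀ i j, IntervalIntegrable (fun t => star (x i) * ((Cm t)⁻¹ i j * x j))
        MeasureTheory.volume 0 1 := fun i j => ((hIntInv i j).mul_const (x j)).const_mul _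
    have e1 : ∀ i j, star (x i) * (meanMatrix n A B i j * x j)
        = ∫ t in (0:ℝ)..1, star (x i) * ((Cm t)⁻¹ i j * x j) := by
      intro i j
      rw [hMapply, ← intervalIntegral.integral_mul_const, ← intervalIntegral.integral_const_mul]
    calc (∑ i, ∑ j, star (x i) * (meanMatrix n A B i j * x j))
        = ∑ i, ∑ j, ∫ t in (0:ℝ)..1, star (x i) * ((Cm t)⁻¹ i j * x j) := by
          simp_rw [e1]
      _ = ∑ i, ∫ t in (0:ℝ)..1, ∑ j, star (x i) * ((Cm t)⁻¹ i j * x j) :=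
          Finset.sum_congr rfl fun i _ =>
            (intervalIntegral.integral_finset_sum fun j _ => hint i j).symm
      _ = ∫ t in (0:ℝ)..1, ∑ i, ∑ j, star (x i) * ((Cm t)⁻¹ i j * x j) := by
          refine (intervalIntegral.integral_finset_sum fun i _ => ?_).symm
          apply ContinuousOn.intervalIntegrable
          apply continuousOn_finset_sum
          intro j _
          exact continuousOn_const.mul ((hEntryCont i j).mul continuousOn_const)
      _ = ∫ t in (0:ℝ)..1, star x ⬝ᵥ ((Cm t)⁻¹ *ᵥ x) := by
          congr 1
          funext t
          rw [hquad]
  have hcHerm : ∀ c : ℝ, (((c:ℝ):ℂ) • (1 : Matrix (Fin n) (Fin n) ℂ)).IsHermitian := by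
    intro c
    rw [Matrix.IsHermitian, conjTranspose_smul, conjTranspose_one]
    congr 1
    simp [Complex.star_def, Complex.conj_ofReal]
  have hqCont : ∀ x : Fin n → ℂ,
      ContinuousOn (fun t => star x ⬝ᵥ ((Cm t)⁻¹ *ᵥ x)) (Set.uIcc (0:ℝ) 1) := by
    intro x
    have e : (fun t => star x ⬝ᵥ ((Cm t)⁻¹ *ᵥ x))
        = fun t => ∑ i, ∑ j, star (x i) * ((Cm t)⁻¹ i j * x j) := funext fun t => hquad _ x
    rw [e]
    apply continuousOn_finset_sum
    intro i _
    apply continuousOn_finset_sum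
    intro j _
    exact continuousOn_const.mul ((hEntryCont i j).mul continuousOn_const)
  have hIntNonneg : ∀ z : ℝ → ℂ, IntervalIntegrable z MeasureTheory.volume 0 1 →
      (∀ t ∈ Set.Icc (0:ℝ) 1, 0 ≤ z t) → 0 ≤ ∫ t in (0:ℝ)..1, z t := by
    intro z hint hnn
    have hre := Complex.reCLM.intervalIntegral_comp_comm hint
    have him := Complex.imCLM.intervalIntegral_comp_comm hint
    rw [Complex.nonneg_iff]
    constructor
    · calc (0:ℝ) ≤ ∫ t in (0:ℝ)..1, (z t).re :=
            intervalIntegral.integral_nonneg zero_le_one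
              (fun u hu => (Complex.nonneg_iff.mp (hnn u hu)).1)
        _ = (∫ t in (0:ℝ)..1, z t).re := by simpa using hre
    · have e0 : (∫ t in (0:ℝ)..1, (z t).im) = 0 := by
        rw [intervalIntegral.integral_congr (g := fun _ => (0:ℝ)) ?_]
        · simp
        · intro u hu
          rw [Set.uIcc_of_le zero_le_one] at hu
          exact ((Complex.nonneg_iff.mp (hnn u hu)).2).symm
      calc (0:ℝ) = ∫ t in (0:ℝ)..1, (z t).im := e0.symm
        _ = (∫ t in (0:ℝ)..1, z t).im := by simpa using him
  refine ⟨hMHerm, ?_, ?_, ?_⟩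
  · refine Matrix.PosSemidef.of_dotProduct_mulVec_nonneg (hMHerm.sub (hcHerm Lam⁻¹)) fun x => ?_
    have e : star x ⬝ᵥ ((meanMatrix n A B - ((Lam⁻¹:ℝ):ℂ) • 1) *ᵥ x)
        = ∫ t in (0:ℝ)..1, star x ⬝ᵥ (((Cm t)⁻¹ - ((Lam⁻¹:ℝ):ℂ) • 1) *ᵥ x) := by
      rw [sub_mulVec, dotProduct_sub, hQM x]
      have e2 : ∀ t:ℝ, star x ⬝ᵥ (((Cm t)⁻¹ - ((Lam⁻¹:ℝ):ℂ) • 1) *ᵥ x)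
          = star x ⬝ᵥ ((Cm t)⁻¹ *ᵥ x) - star x ⬝ᵥ ((((Lam⁻¹:ℝ):ℂ) • 1) *ᵥ x) := fun t => by
        rw [sub_mulVec, dotProduct_sub]
      rw [funext e2, intervalIntegral.integral_sub ((hqCont x).intervalIntegrable
        ) intervalIntegrable_const, intervalIntegral.integral_const]
      simp
    rw [e]
    refine hIntNonneg _ ?_ (fun t ht => (hbounds t ht).1.dotProduct_mulVec_nonneg x)
    apply ContinuousOn.intervalIntegrable
    have e3 : (fun t => star x ⬝ᵥ (((Cm t)⁻¹ - ((Lam⁻¹:ℝ):ℂ) • 1) *ᵥ x))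
        = fun t => star x ⬝ᵥ ((Cm t)⁻¹ *ᵥ x) - star x ⬝ᵥ ((((Lam⁻¹:ℝ):ℂ) • 1) *ᵥ x) :=
      funext fun t => by rw [sub_mulVec, dotProduct_sub]
    rw [e3]
    exact (hqCont x).sub continuousOn_const
  · refine Matrix.PosSemidef.of_dotProduct_mulVec_nonneg ((hcHerm lam⁻¹).sub hMHerm) fun x => ?_
    have e : star x ⬝ᵥ ((((lam⁻¹:ℝ):ℂ) • 1 - meanMatrix n A B) *ᵥ x)
        = ∫ t in (0:ℝ)..1, star x ⬝ᵥ ((((lam⁻¹:ℝ):ℂ) • 1 - (Cm t)⁻¹) *ᵥ x) := by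
      rw [sub_mulVec, dotProduct_sub, hQM x]
      have e2 : ∀ t:ℝ, star x ⬝ᵥ ((((lam⁻¹:ℝ):ℂ) • 1 - (Cm t)⁻¹) *ᵥ x)
          = star x ⬝ᵥ ((((lam⁻¹:ℝ):ℂ) • 1) *ᵥ x) - star x ⬝ᵥ ((Cm t)⁻¹ *ᵥ x) := fun t => by
        rw [sub_mulVec, dotProduct_sub]
      rw [funext e2, intervalIntegral.integral_sub intervalIntegrable_const
        ((hqCont x).intervalIntegrable), intervalIntegral.integral_const]
      simp
    rw [e]
    refine hIntNonneg _ ?_ (fun t ht => (hbounds t ht).2.dotProduct_mulVec_nonneg x)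
    apply ContinuousOn.intervalIntegrable
    have e3 : (fun t => star x ⬝ᵥ ((((lam⁻¹:ℝ):ℂ) • 1 - (Cm t)⁻¹) *ᵥ x))
        = fun t => star x ⬝ᵥ ((((lam⁻¹:ℝ):ℂ) • 1) *ᵥ x) - star x ⬝ᵥ ((Cm t)⁻¹ *ᵥ x) :=
      funext fun t => by rw [sub_mulVec, dotProduct_sub]
    rw [e3]
    exact continuousOn_const.sub (hqCont x)
  · -- log det identity
    have htrcont : ContinuousOn (fun t => ((Cm t)⁻¹ * D).trace) (Set.uIcc (0:ℝ) 1) := by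
      have e : (fun t => ((Cm t)⁻¹ * D).trace) = fun t => ∑ i, ∑ j, (Cm t)⁻¹ i j * D j i := by
        funext t
        simp [Matrix.trace, Matrix.diag, Matrix.mul_apply]
      rw [e]
      apply continuousOn_finset_sum
      intro i _
      apply continuousOn_finset_sum
      intro j _
      exact (hEntryCont i j).mul continuousOn_const
    have htrint : IntervalIntegrable (fun t => ((Cm t)⁻¹ * D).trace) MeasureTheory.volume 0 1 := htrcont.intervalIntegrable
    have hφint : IntervalIntegrable (fun t => (((Cm t)⁻¹ * D).trace).re)
        MeasureTheory.volume 0 1 :=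
      (Complex.continuous_re.comp_continuousOn htrcont).intervalIntegrable
    have hderiv : ∀ s ∈ Set.uIcc (0:ℝ) 1,
        HasDerivAt (fun t => Real.log ((Cm t).det.re)) ((((Cm s)⁻¹ * D).trace).re) s := by
      intro s hs
      rw [Set.uIcc_of_le zero_le_one] at hs
      have hdetpos := (hPD s hs).det_pos
      have hdre : 0 < ((Cm s).det).re := (Complex.pos_iff.mp hdetpos).1
      have hdim : ((Cm s).det).im = 0 := ((Complex.pos_iff.mp hdetpos).2).symm
      have hunit : IsUnit (Cm s).det := isUnit_iff_ne_zero.mpr hdetpos.ne'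
      have h0 := aux_hasDerivAt_det (Cm s) D hunit
      have hg : HasDerivAt (fun z : ℂ => z - (s:ℂ)) 1 (s:ℂ) := (hasDerivAt_id _).sub_const _
      have h1 : HasDerivAt (fun z : ℂ => (Cm s + (z - (s:ℂ)) • D).det)
          ((Cm s).det * ((Cm s)⁻¹ * D).trace) (s:ℂ) := by
        have h0' : HasDerivAt (fun z : ℂ => (Cm s + z • D).det)
            ((Cm s).det * ((Cm s)⁻¹ * D).trace) ((s:ℂ) - (s:ℂ)) := by
          simpa using h0
        have hcomp : HasDerivAt ((fun z : ℂ => (Cm s + z • D).det) ∘ (fun z : ℂ => z - (s:ℂ)))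
            (((Cm s).det * ((Cm s)⁻¹ * D).trace) * 1) (s:ℂ) := HasDerivAt.comp _ h0' hg
        simpa [Function.comp_def] using hcomp
      have h2 := h1.comp_ofReal
      have hpath : (fun t : ℝ => (Cm s + (((t:ℝ):ℂ) - (s:ℂ)) • D).det)
          = fun t : ℝ => (Cm t).det := by
        funext t
        congr 1
        ext i j
        simp only [Matrix.add_apply, Matrix.smul_apply, Matrix.sub_apply, smul_eq_mul, hCm, hD]
        push_cast
        ring
      rw [hpath] at h2
      have h3 : HasDerivAt (fun t => ((Cm t).det).re)
          (((Cm s).det * ((Cm s)⁻¹ * D).trace).re) s := by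
        simpa [Function.comp_def] using Complex.reCLM.hasFDerivAt.comp_hasDerivAt s h2
      have h4 := h3.log hdre.ne'
      convert h4 using 1
      rw [Complex.mul_re, hdim, zero_mul, sub_zero, mul_comm, mul_div_assoc,
        div_self hdre.ne', mul_one]
    have hFTC := intervalIntegral.integral_eq_sub_of_hasDerivAt hderiv hφint
    have hC1 : Cm 1 = A := by simp [hCm]
    have hC0 : Cm 0 = B := by simp [hCm]
    rw [hC1, hC0] at hFTC
    have etr : ∀ (N : Matrix (Fin n) (Fin n) ℂ), (N * D).trace = ∑ i, ∑ j, N i j * D j i := by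
      intro N
      simp [Matrix.trace, Matrix.diag, Matrix.mul_apply]
    have htr : ((meanMatrix n A B * D).trace) = ∫ t in (0:ℝ)..1, ((Cm t)⁻¹ * D).trace := by
      rw [etr]
      have e1 : ∀ i j, meanMatrix n A B i j * D j i
          = ∫ t in (0:ℝ)..1, (Cm t)⁻¹ i j * D j i := by
        intro i j
        rw [hMapply, ← intervalIntegral.integral_mul_const]
      calc (∑ i, ∑ j, meanMatrix n A B i j * D j i)
          = ∑ i, ∑ j, ∫ t in (0:ℝ)..1, (Cm t)⁻¹ i j * D j i := by simp_rw [e1]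
        _ = ∑ i, ∫ t in (0:ℝ)..1, ∑ j, (Cm t)⁻¹ i j * D j i :=
            Finset.sum_congr rfl fun i _ =>
              (intervalIntegral.integral_finset_sum fun j _ => (hIntInv i j).mul_const _).symm
        _ = ∫ t in (0:ℝ)..1, ∑ i, ∑ j, (Cm t)⁻¹ i j * D j i := by
            refine (intervalIntegral.integral_finset_sum fun i _ => ?_).symm
            apply ContinuousOn.intervalIntegrable
            apply continuousOn_finset_sum
            intro j _
            exact (hEntryCont i j).mul continuousOn_const
        _ = ∫ t in (0:ℝ)..1, ((Cm t)⁻¹ * D).trace :=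
            intervalIntegral.integral_congr fun t _ => (etr _).symm
    have hre : ((meanMatrix n A B * D).trace).re
        = ∫ t in (0:ℝ)..1, (((Cm t)⁻¹ * D).trace).re := by
      rw [htr]
      simpa using (Complex.reCLM.intervalIntegral_comp_comm htrint).symm
    rw [hre]
    exact hFTC.symm
end

section
/- Let M be a nonempty compact topological space, let 0 < τ ≤ 1, and let F : M × [0,τ) → ℝ be continuous with F ≥ 0. Suppose that sup { t·F(x,t) : (x,t) ∈ M × [0,τ) } = ∞. Then for every natural number i there exists a point (x_i, t_i) ∈ M × (0, τ) such that t_i·F(x_i,t_i) ≥ i and t_i·F(x_i,t_i) = sup { t·F(x,t) : (x,t) ∈ M × [0, t_i] }; in particular there is a sequence of points at which the quantity t·F attains its running supremum and tends to infinity. (This is the point-picking step in the blowup argument for the a priori regularity theorem for uniformly parabolic solutions of the flow.) -/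
/-!
Point-picking: if `F ≥ 0` is continuous on `M × [0,τ)` with `M` compact and
`sup t·F = ∞`, then for every `i` there is a point `(x_i, t_i)` with
`t_i F(x_i,t_i) ≥ i` attaining the running supremum of `t·F` over `M × [0, t_i]`.
-/

theorem statement9 {M : Type*} [TopologicalSpace M] [CompactSpace M] [Nonempty M]
    (τ : ℝ) (hτ0 : 0 < τ) (hτ1 : τ ≤ 1)
    (F : M × ℝ → ℝ)
    (hF_cont : ContinuousOn F (Set.univ ×ˢ Set.Ico (0 : ℝ) τ))
    (hF_nonneg : ∀ (x : M) (t : ℝ), 0 ≤ t → t < τ → 0 ≤ F (x, t))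
    (hF_unbdd : ∀ C : ℝ, ∃ (x : M) (t : ℝ), 0 ≤ t ∧ t < τ ∧ C ≤ t * F (x, t)) :
    ∀ i : ℕ, ∃ (x : M) (t : ℝ), 0 < t ∧ t < τ ∧ (i : ℝ) ≤ t * F (x, t) ∧
      ∀ (y : M) (s : ℝ), 0 ≤ s → s ≤ t → s * F (y, s) ≤ t * F (x, t) := by
  intro i
  obtain ⟨x₀, t₀, ht₀0, ht₀τ, hC⟩ := hF_unbdd (max (i : ℝ) 1)
  -- compact set K = univ ×ˢ Icc 0 t₀
  set K : Set (M × ℝ) := Set.univ ×ˢ Set.Icc (0 : ℝ) t₀ with hK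
  have hKsub : K ⊆ Set.univ ×ˢ Set.Ico (0 : ℝ) τ := by
    rintro ⟨y, s⟩ ⟨-, hs0, hs1⟩
    exact ⟨Set.mem_univ _, hs0, lt_of_le_of_lt hs1 ht₀τ⟩
  have hKcomp : IsCompact K := isCompact_univ.prod isCompact_Icc
  have hKne : K.Nonempty := ⟨(x₀, t₀), Set.mem_univ _, ht₀0, le_rfl⟩
  have hGcont : ContinuousOn (fun p : M × ℝ => p.2 * F p) K :=
    (continuous_snd.continuousOn).mul (hF_cont.mono hKsub)
  obtain ⟨⟨x, t⟩, hxtK, hmax⟩ := hKcomp.exists_isMaxOn hKne hGcont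
  obtain ⟨-, ht0, htt₀⟩ := hxtK
  have htτ : t < τ := lt_of_le_of_lt htt₀ ht₀τ
  have hge : max (i : ℝ) 1 ≤ t * F (x, t) :=
    le_trans hC (hmax (show (x₀, t₀) ∈ K from ⟨Set.mem_univ _, ht₀0, le_rfl⟩))
  have ht01 : (1 : ℝ) ≤ t * F (x, t) := le_trans (le_max_right _ _) hge
  have htpos : 0 < t := by
    rcases lt_or_eq_of_le ht0 with h | h
    · exact h
    · exfalso; simp only [] at h; rw [← h] at ht01; simp at ht01; linarith
  refine ⟨x, t, htpos, htτ, le_trans (le_max_left _ _) hge, ?_⟩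
  intro y s hs0 hst
  exact hmax (show (y, s) ∈ K from ⟨Set.mem_univ _, hs0, le_trans hst htt₀⟩)
end
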